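/- Let R be a Dedekind complete weakly σ-distributive Riesz space, (T,d) a compact metric space, Σ the σ-algebra of Borel subsets of T, and μ : Σ → R a positive finitely additive set function which is regular. Then μ is σ-additive: for every sequence (A_k)_k of pairwise disjoint sets in Σ, μ(⋃_k A_k) = Σ_{k=1}^{∞} μ(A_k), where the series is the (D)-limit (equivalently order limit) of its partial sums. -/

import Mathlib

open scoped BigOperators

/-- A `(D)`-sequence (regulator) in a Riesz space `R`: a bounded double sequence
which is nonnegative, decreasing in `j`, and with `⨅ j, a i j = 0` for each `i`. -/
def IsDSeq {R : Type*} [ConditionallyCompleteLattice R] [AddCommGroup R]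
    (a : ℕ → ℕ → R) : Prop :=
  (∃ u : R, ∀ i j, a i j ≤ u) ∧ (∀ i j, 0 ≤ a i j) ∧
    (∀ i j, a i (j + 1) ≤ a i j) ∧ (∀ i, (⨅ j, a i j) = 0)

/-- `R` is weakly σ-distributive. -/
def WeaklySigmaDistrib (R : Type*) [ConditionallyCompleteLattice R] [AddCommGroup R] : Prop :=
  ∀ a : ℕ → ℕ → R, IsDSeq a → (⨅ φ : ℕ → ℕ, ⨆ i, a i (φ i)) = 0

/-- `R` is super Dedekind complete: every nonempty subset bounded from above contains a
countable subset with the same supremum. -/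
def SuperDedekindComplete (R : Type*) [ConditionallyCompleteLattice R] : Prop :=
  ∀ S : Set R, S.Nonempty → BddAbove S →
    ∃ C : Set R, C ⊆ S ∧ C.Nonempty ∧ C.Countable ∧ sSup C = sSup S

/-- `(D)`-convergence of a sequence in `R`. -/
def DConv {R : Type*} [ConditionallyCompleteLattice R] [AddCommGroup R]
    (r : ℕ → R) (l : R) : Prop :=
  ∃ a : ℕ → ℕ → R, IsDSeq a ∧
    ∀ φ : ℕ → ℕ, ∃ n₀ : ℕ, ∀ n ≥ n₀, |r n - l| ≤ ⨆ i, a i (φ i)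

/-- The closure of a subset `C` of `R`:
`cl(C) = ⋃_{(a_{i,j})} ⋂_{φ} U(C, ⨆ i, a i (φ i))`. -/
def clSet {R : Type*} [ConditionallyCompleteLattice R] [AddCommGroup R]
    (C : Set R) : Set R :=
  {z | ∃ a : ℕ → ℕ → R, IsDSeq a ∧
    ∀ φ : ℕ → ℕ, ∃ x ∈ C, |x - z| ≤ ⨆ i, a i (φ i)}

/-- A tagged partition `{(Es i, ts i) : i < k}` of the set `E`:
measurable pieces, tags belonging to the pieces, overlaps of `μ`-measure zero,
whose union is `E`. -/
def IsPartition {R : Type*} [ConditionallyCompleteLattice R] [AddCommGroup R]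
    {T : Type*} [MeasurableSpace T]
    (μ : Set T → R) (E : Set T) (k : ℕ) (Es : ℕ → Set T) (ts : ℕ → T) : Prop :=
  (∀ i < k, MeasurableSet (Es i)) ∧ (∀ i < k, ts i ∈ Es i) ∧
    (∀ i < k, ∀ j < k, i ≠ j → μ (Es i ∩ Es j) = 0) ∧ (⋃ i < k, Es i) = E

/-- `γ`-fineness of a tagged partition. -/
def IsFine {T : Type*} [PseudoMetricSpace T]
    (γ : T → ℝ) (k : ℕ) (Es : ℕ → Set T) (ts : ℕ → T) : Prop :=
  ∀ i < k, ∀ w ∈ Es i, dist w (ts i) < γ (ts i)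

/-- Regularity of a positive finitely additive set function `μ` on the Borel sets of `T`. -/
def IsRegularSetFn {R : Type*} [ConditionallyCompleteLattice R] [AddCommGroup R]
    {T : Type*} [MeasurableSpace T] [TopologicalSpace T]
    (μ : Set T → R) : Prop :=
  ∀ E : Set T, MeasurableSet E → ∃ a : ℕ → ℕ → R, IsDSeq a ∧
    ∀ φ : ℕ → ℕ, ∃ K U : Set T, IsCompact K ∧ IsOpen U ∧ K ⊆ E ∧ E ⊆ U ∧
      μ (U \ K) ≤ ⨆ i, a i (φ i)

/-- `f` is Kurzweil–Henstock integrable on `E` with integral `I`. -/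
def HasKHIntegral {R : Type*} [ConditionallyCompleteLattice R] [CommRing R]
    {T : Type*} [MeasurableSpace T] [PseudoMetricSpace T]
    (μ : Set T → R) (f : T → R) (E : Set T) (I : R) : Prop :=
  ∃ a : ℕ → ℕ → R, IsDSeq a ∧ ∀ φ : ℕ → ℕ, ∃ γ : T → ℝ, (∀ t, 0 < γ t) ∧
    ∀ (k : ℕ) (Es : ℕ → Set T) (ts : ℕ → T),
      IsPartition μ E k Es ts → IsFine γ k Es ts →
        |(∑ i ∈ Finset.range k, f (ts i) * μ (Es i)) - I| ≤ ⨆ i, a i (φ i)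

/-- The closed Minkowski sum `Σ_{i<k} F(ts i) · μ(Es i)` of the sets `F(ts i) μ(Es i)`. -/
def setRiemannSum {R : Type*} [ConditionallyCompleteLattice R] [CommRing R]
    {T : Type*} [MeasurableSpace T]
    (μ : Set T → R) (F : T → Set R) (k : ℕ) (Es : ℕ → Set T) (ts : ℕ → T) : Set R :=
  clSet {c | ∃ g : ℕ → R, (∀ i < k, g i ∈ F (ts i)) ∧
    c = ∑ i ∈ Finset.range k, g i * μ (Es i)}

/-- The `(*)`-integral `Φ(F,E)` of a multifunction `F` on `E`. -/
def starIntegral {R : Type*} [ConditionallyCompleteLattice R] [CommRing R]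
    {T : Type*} [MeasurableSpace T] [PseudoMetricSpace T]
    (μ : Set T → R) (F : T → Set R) (E : Set T) : Set R :=
  {z | ∃ a : ℕ → ℕ → R, IsDSeq a ∧ ∀ φ : ℕ → ℕ, ∃ γ : T → ℝ, (∀ t, 0 < γ t) ∧
    ∀ (k : ℕ) (Es : ℕ → Set T) (ts : ℕ → T),
      IsPartition μ E k Es ts → IsFine γ k Es ts →
        ∃ c ∈ setRiemannSum μ F k Es ts, |z - c| ≤ ⨆ i, a i (φ i)}

/-- The closed Minkowski sum of the finite family `S 0, …, S (n-1)` of subsets of `R`. -/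
def finMinkSum {R : Type*} [ConditionallyCompleteLattice R] [AddCommGroup R]
    (n : ℕ) (S : ℕ → Set R) : Set R :=
  clSet {x | ∃ g : ℕ → R, (∀ k < n, g k ∈ S k) ∧ x = ∑ k ∈ Finset.range n, g k}

/-- The Aumann integral of `F` on `A`, via Kurzweil–Henstock integrable a.e. selections. -/
def AumannIntegral {R : Type*} [ConditionallyCompleteLattice R] [CommRing R]
    {T : Type*} [MeasurableSpace T] [PseudoMetricSpace T]
    (μ : Set T → R) (F : T → Set R) (A : Set T) : Set R :=
  {I | ∃ f : T → R,
    (∃ N : Set T, MeasurableSet N ∧ μ N = 0 ∧ ∀ t ∉ N, f t ∈ F t) ∧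
    (∃ J : R, HasKHIntegral μ f Set.univ J) ∧ HasKHIntegral μ f A I}

/-!
Write `E = ⋃ k, A k` and `C n = E \ ⋃ k < n, A k`. Then `μ E` is the `n`-th partial sum plus
`μ (C n)`, so it suffices that `⨅ n, μ (C n) = 0`. Regularity gives compact `K p ⊆ C p ⊆ U p`
with `μ (U p \ K p)` controlled by a regulator `a p`. As `⋂ p, K p = ∅`, compactness already
empties a finite intersection, so `C n ⊆ ⋃ p ≤ n, C p \ K p` and
`μ (C n) ≤ ∑ p ≤ n, μ (U p \ K p)`. Since `n` depends on the choice function, the regulators are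
merged into the single regulator `μ (C 0) ⊓ ∑ p ≤ i, 2 ^ (p + 1) • a p (i - p) j`: because
`∑ p, 2⁻¹ ^ (p + 1) ≤ 1`, one has `u ⊓ ∑ p ≤ n, x p ≤ ⨆ p ≤ n, u ⊓ 2 ^ (p + 1) • x p` for
`x ≥ 0`, whatever `n`. Weak σ-distributivity of this regulator then forces `⨅ n, μ (C n) = 0`.
-/

open Finset

section LatticeOrderedGroup

variable {R : Type*} [Lattice R] [AddCommGroup R] [AddLeftMono R]

lemma add_le_two_nsmul_sup_two_nsmul (x y : R) : x + y ≤ 2 • x ⊔ 2 • y := by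
  have h : 2 • x ⊔ 2 • y - (x + y) = |x - y| := by
    rw [sup_sub, abs, neg_sub]
    congr 1 <;> abel
  exact sub_nonneg.mp (h ▸ abs_nonneg _)

lemma inf_sum_range_le_of_forall_inf_two_pow_nsmul_le {u W : R} :
    ∀ {q : ℕ} {x : ℕ → R}, (∀ p, 0 ≤ x p) → (∀ p ≤ q, u ⊓ 2 ^ (p + 1) • x p ≤ W) →
      u ⊓ ∑ p ∈ range (q + 1), x p ≤ W
  | 0, x, hx, h => by
    refine (inf_le_inf_left u ?_).trans (h 0 le_rfl)
    simpa [two_nsmul] using le_add_of_nonneg_left (a := x 0) (hx 0)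
  | q + 1, x, hx, h => by
    rw [sum_range_succ']
    calc u ⊓ (∑ p ∈ range (q + 1), x (p + 1) + x 0)
        ≤ u ⊓ ((∑ p ∈ range (q + 1), 2 • x (p + 1)) ⊔ 2 • x 0) := by
          rw [← smul_sum]
          exact inf_le_inf_left u (add_le_two_nsmul_sup_two_nsmul _ _)
      _ = (u ⊓ ∑ p ∈ range (q + 1), 2 • x (p + 1)) ⊔ u ⊓ 2 • x 0 :=
          @inf_sup_left R (AddCommGroup.toDistribLattice R) _ _ _
      _ ≤ W := by
          refine sup_le (inf_sum_range_le_of_forall_inf_two_pow_nsmul_le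
            (fun p => nsmul_nonneg (hx _) 2) fun p hp => ?_) (by simpa using h 0 (Nat.zero_le _))
          simpa [smul_smul, ← pow_succ] using h (p + 1) (by omega)

end LatticeOrderedGroup

section ConditionallyComplete

variable {R : Type*} [ConditionallyCompleteLattice R] [AddCommGroup R] [AddLeftMono R]

lemma inf_ciSup_le_ciSup_inf {ι : Sort*} [Nonempty ι] (u : R) {f : ι → R}
    (hf : BddAbove (Set.range f)) : u ⊓ ⨆ i, f i ≤ ⨆ i, u ⊓ f i := by
  set S := ⨆ i, f i
  set s := ⨆ i, u ⊓ f i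
  have hs : BddAbove (Set.range fun i => u ⊓ f i) := ⟨u, by rintro _ ⟨i, rfl⟩; exact inf_le_left⟩
  -- `inf_add_sup` turns the bound on each `u ⊓ f i` into a bound on `f i` itself
  have key : S ≤ s - u + u ⊔ S := ciSup_le fun i =>
    calc f i = u ⊓ f i + u ⊔ f i - u := by rw [inf_add_sup]; abel
      _ ≤ s + u ⊔ S - u := by gcongr; exacts [le_ciSup hs i, le_ciSup hf i]
      _ = s - u + u ⊔ S := by abel
  calc u ⊓ S = u + S - u ⊔ S := by rw [← inf_add_sup]; abel
    _ ≤ u + (s - u + u ⊔ S) - u ⊔ S := by gcongr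
    _ = s := by abel

lemma sum_ciSup_le_ciSup_sum {ι κ : Type*} [DecidableEq ι] [Nonempty κ] (s : Finset ι)
    {F : ι → κ → R} {B : ι → R} (hB : ∀ p k, F p k ≤ B p) :
    ∑ p ∈ s, ⨆ k, F p k ≤ ⨆ t : ι → κ, ∑ p ∈ s, F p (t p) := by
  induction s using Finset.induction_on with
  | empty => simp
  | insert a s ha ih =>
    have hbdd : BddAbove (Set.range fun t : ι → κ => ∑ p ∈ insert a s, F p (t p)) :=
      ⟨∑ p ∈ insert a s, B p, by rintro _ ⟨t, rfl⟩; exact sum_le_sum fun p _ => hB p (t p)⟩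
    rw [sum_insert ha]
    refine (add_le_add le_rfl ih).trans (ciSup_add_ciSup_le fun k t => ?_)
    have : F a k + ∑ p ∈ s, F p (t p) = ∑ p ∈ insert a s, F p (Function.update t a k p) := by
      rw [sum_insert ha, Function.update_self]
      congr 1
      exact sum_congr rfl fun p hp => by rw [Function.update_of_ne (ne_of_mem_of_not_mem hp ha)]
    exact this ▸ le_ciSup hbdd _

lemma ciInf_add_eq_zero {ι : Type*} [SemilatticeSup ι] [Nonempty ι] {g h : ι → R}
    (hg : Antitone g) (hh : Antitone h) (hg₀ : 0 ≤ g) (hh₀ : 0 ≤ h)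
    (hg' : ⨅ j, g j = 0) (hh' : ⨅ j, h j = 0) : ⨅ j, (g j + h j) = 0 := by
  have hbdd : BddBelow (Set.range fun j => g j + h j) :=
    ⟨0, by rintro _ ⟨j, rfl⟩; exact add_nonneg (hg₀ j) (hh₀ j)⟩
  refine le_antisymm ?_ (le_ciInf fun j => add_nonneg (hg₀ j) (hh₀ j))
  calc ⨅ j, (g j + h j) ≤ (⨅ j, g j) + ⨅ j, h j := le_ciInf_add_ciInf fun i j =>
        (ciInf_le hbdd (i ⊔ j)).trans (add_le_add (hg le_sup_left) (hh le_sup_right))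
    _ = 0 := by rw [hg', hh', add_zero]

lemma ciInf_sum_eq_zero {ι κ : Type*} [SemilatticeSup ι] [Nonempty ι] [DecidableEq κ]
    (s : Finset κ) {f : κ → ι → R} (hf : ∀ p, Antitone (f p)) (hf₀ : ∀ p, 0 ≤ f p)
    (hf' : ∀ p, ⨅ j, f p j = 0) : ⨅ j, ∑ p ∈ s, f p j = 0 := by
  induction s using Finset.induction_on with
  | empty => simp
  | insert a s ha ih =>
    simp only [sum_insert ha]
    exact ciInf_add_eq_zero (hf a) (fun i j hij => sum_le_sum fun p _ => hf p hij) (hf₀ a)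
      (fun j => sum_nonneg fun p _ => hf₀ p j) (hf' a) ih

lemma ciInf_nsmul_eq_zero {ι : Type*} [SemilatticeSup ι] [Nonempty ι] (n : ℕ) {g : ι → R}
    (hg : Antitone g) (hg₀ : 0 ≤ g) (hg' : ⨅ j, g j = 0) : ⨅ j, n • g j = 0 := by
  simpa using ciInf_sum_eq_zero (range n) (f := fun _ => g) (fun _ => hg) (fun _ => hg₀)
    fun _ => hg'

end ConditionallyComplete

section Regulator

variable {R : Type*} [ConditionallyCompleteLattice R] [AddCommGroup R]

lemma IsDSeq.antitone {a : ℕ → ℕ → R} (ha : IsDSeq a) (i : ℕ) : Antitone (a i) :=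
  antitone_nat_of_succ_le (ha.2.2.1 i)

variable [AddLeftMono R]

/-- The weights `2 ^ (p + 1)` are what `inf_sum_range_le_of_forall_inf_two_pow_nsmul_le` consumes;
the cap `u` keeps the double sequence bounded. -/
def mergedRegulator (u : R) (a : ℕ → ℕ → ℕ → R) (i j : ℕ) : R :=
  u ⊓ ∑ p ∈ range (i + 1), 2 ^ (p + 1) • a p (i - p) j

lemma isDSeq_mergedRegulator {u : R} (hu : 0 ≤ u) {a : ℕ → ℕ → ℕ → R}
    (ha : ∀ p, IsDSeq (a p)) : IsDSeq (mergedRegulator u a) := by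
  have hsum₀ i j : 0 ≤ ∑ p ∈ range (i + 1), 2 ^ (p + 1) • a p (i - p) j :=
    sum_nonneg fun p _ => nsmul_nonneg ((ha p).2.1 _ _) _
  refine ⟨⟨u, fun i j => inf_le_left⟩, fun i j => le_inf hu (hsum₀ i j), fun i j => ?_,
    fun i => le_antisymm ?_ (le_ciInf fun j => le_inf hu (hsum₀ i j))⟩
  · exact inf_le_inf_left u (sum_le_sum fun p _ => nsmul_le_nsmul_right ((ha p).2.2.1 _ _) _)
  · calc ⨅ j, mergedRegulator u a i j ≤ ⨅ j, ∑ p ∈ range (i + 1), 2 ^ (p + 1) • a p (i - p) j :=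
          ciInf_mono ⟨0, by rintro _ ⟨j, rfl⟩; exact le_inf hu (hsum₀ i j)⟩ fun j => inf_le_right
      _ = 0 := ciInf_sum_eq_zero _
          (fun p _ _ hjk => nsmul_le_nsmul_right ((ha p).antitone _ hjk) _)
          (fun p j => nsmul_nonneg ((ha p).2.1 _ _) _)
          fun p => ciInf_nsmul_eq_zero _ ((ha p).antitone _) (fun j => (ha p).2.1 _ _)
            ((ha p).2.2.2 _)

lemma inf_sum_ciSup_le_ciSup_mergedRegulator (u : R) {a : ℕ → ℕ → ℕ → R}
    (ha : ∀ p, IsDSeq (a p)) (φ : ℕ → ℕ) (n : ℕ) :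
    u ⊓ ∑ p ∈ range (n + 1), ⨆ k, a p k (φ (k + p)) ≤ ⨆ i, mergedRegulator u a i (φ i) := by
  choose B hB using fun p => (ha p).1
  have hW : BddAbove (Set.range fun i => mergedRegulator u a i (φ i)) :=
    ⟨u, by rintro _ ⟨i, rfl⟩; exact inf_le_left⟩
  have hsums : BddAbove (Set.range fun t : ℕ → ℕ =>
      ∑ p ∈ range (n + 1), a p (t p) (φ (t p + p))) :=
    ⟨∑ p ∈ range (n + 1), B p, by rintro _ ⟨t, rfl⟩; exact sum_le_sum fun p _ => hB p _ _⟩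
  calc u ⊓ ∑ p ∈ range (n + 1), ⨆ k, a p k (φ (k + p))
      ≤ u ⊓ ⨆ t : ℕ → ℕ, ∑ p ∈ range (n + 1), a p (t p) (φ (t p + p)) :=
        inf_le_inf_left u (sum_ciSup_le_ciSup_sum _ fun p k => hB p k _)
    _ ≤ ⨆ t : ℕ → ℕ, u ⊓ ∑ p ∈ range (n + 1), a p (t p) (φ (t p + p)) :=
        inf_ciSup_le_ciSup_inf u hsums
    _ ≤ ⨆ i, mergedRegulator u a i (φ i) := ciSup_le fun t =>
        inf_sum_range_le_of_forall_inf_two_pow_nsmul_le (fun p => (ha p).2.1 _ _) fun p _ => ?_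
  -- the `p`-th term reappears in `mergedRegulator u a i` at the diagonal index `i = t p + p`
  refine le_trans (inf_le_inf_left u ?_) (le_ciSup hW (t p + p))
  simpa using single_le_sum (f := fun q => 2 ^ (q + 1) • a q (t p + p - q) (φ (t p + p)))
    (fun q _ => nsmul_nonneg ((ha q).2.1 _ _) _) (mem_range.2 (by omega : p < t p + p + 1))

end Regulator

section FinitelyAdditive

variable {T R : Type*} [MeasurableSpace T] [AddCommGroup R]

def IsFinitelyAdditive (μ : Set T → R) : Prop :=
  ∀ A B : Set T, MeasurableSet A → MeasurableSet B → Disjoint A B → μ (A ∪ B) = μ A + μ B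

namespace IsFinitelyAdditive

variable {μ : Set T → R}

lemma apply_empty (hμ : IsFinitelyAdditive μ) : μ ∅ = 0 := by
  simpa using hμ ∅ ∅ .empty .empty disjoint_bot_left

lemma apply_eq_add_diff (hμ : IsFinitelyAdditive μ) {X Y : Set T} (hX : MeasurableSet X)
    (hY : MeasurableSet Y) (hXY : X ⊆ Y) : μ Y = μ X + μ (Y \ X) := by
  simpa [Set.union_sdiff_cancel hXY] using hμ X (Y \ X) hX (hY.diff hX) Set.disjoint_sdiff_right

lemma apply_biUnion (hμ : IsFinitelyAdditive μ) {ι : Type*} [DecidableEq ι] (s : Finset ι)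
    {A : ι → Set T} (hA : ∀ k, MeasurableSet (A k)) (hdisj : Pairwise (Function.onFun Disjoint A)) :
    μ (⋃ k ∈ s, A k) = ∑ k ∈ s, μ (A k) := by
  induction s using Finset.induction_on with
  | empty => simpa using hμ.apply_empty
  | insert a s ha ih =>
    rw [set_biUnion_insert, sum_insert ha, ← ih]
    refine hμ _ _ (hA a) (s.measurableSet_biUnion fun k _ => hA k) ?_
    exact Set.disjoint_iUnion₂_right.2 fun k hk => hdisj (ne_of_mem_of_not_mem hk ha).symm

variable [PartialOrder R] [AddLeftMono R]

lemma mono (hμ : IsFinitelyAdditive μ) (hpos : ∀ E, MeasurableSet E → 0 ≤ μ E) {X Y : Set T}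
    (hX : MeasurableSet X) (hY : MeasurableSet Y) (hXY : X ⊆ Y) : μ X ≤ μ Y := by
  rw [hμ.apply_eq_add_diff hX hY hXY]
  exact le_add_of_nonneg_right (hpos _ (hY.diff hX))

lemma apply_union_le (hμ : IsFinitelyAdditive μ) (hpos : ∀ E, MeasurableSet E → 0 ≤ μ E)
    {X Y : Set T} (hX : MeasurableSet X) (hY : MeasurableSet Y) : μ (X ∪ Y) ≤ μ X + μ Y := by
  rw [← Set.union_sdiff_self, hμ X (Y \ X) hX (hY.diff hX) Set.disjoint_sdiff_right]
  exact add_le_add le_rfl (hμ.mono hpos (hY.diff hX) hY Set.sdiff_subset)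

lemma apply_biUnion_le (hμ : IsFinitelyAdditive μ) (hpos : ∀ E, MeasurableSet E → 0 ≤ μ E)
    {ι : Type*} [DecidableEq ι] (s : Finset ι) {A : ι → Set T} (hA : ∀ k, MeasurableSet (A k)) :
    μ (⋃ k ∈ s, A k) ≤ ∑ k ∈ s, μ (A k) := by
  induction s using Finset.induction_on with
  | empty => simp [hμ.apply_empty]
  | insert a s ha ih =>
    rw [set_biUnion_insert, sum_insert ha]
    exact (hμ.apply_union_le hpos (hA a) (s.measurableSet_biUnion fun k _ => hA k)).trans
      (add_le_add le_rfl ih)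

end IsFinitelyAdditive

end FinitelyAdditive

lemma exists_subset_biUnion_diff_of_iInter_eq_empty {T : Type*} [TopologicalSpace T] [T2Space T]
    {C K : ℕ → Set T} (hC : Antitone C) (hC₀ : ⋂ n, C n = ∅) (hK : ∀ n, IsCompact (K n))
    (hKC : ∀ n, K n ⊆ C n) : ∃ n, C n ⊆ ⋃ p ∈ range (n + 1), C p \ K p := by
  have hK₀ : K 0 ∩ ⋂ p, K p = ∅ :=
    Set.subset_empty_iff.1 <| hC₀ ▸ Set.inter_subset_right.trans (Set.iInter_mono hKC)
  obtain ⟨s, hs⟩ := (hK 0).elim_finite_subfamily_closed K (fun p => (hK p).isClosed) hK₀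
  refine ⟨s.sup id, fun x hx => ?_⟩
  by_cases hx₀ : x ∈ K 0
  · obtain ⟨p, hp, hxp⟩ : ∃ p ∈ s, x ∉ K p := by
      by_contra! h
      exact (Set.eq_empty_iff_forall_notMem.1 hs) x ⟨hx₀, Set.mem_iInter₂.2 h⟩
    exact Set.mem_biUnion (mem_range.2 (Nat.lt_succ_of_le (le_sup (f := id) hp)))
      ⟨hC (le_sup (f := id) hp) hx, hxp⟩
  · exact Set.mem_biUnion (mem_range.2 (Nat.succ_pos _)) ⟨hC (Nat.zero_le _) hx, hx₀⟩

theorem IsRegularSetFn.ciInf_eq_zero_of_iInter_eq_empty {R : Type*}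
    [ConditionallyCompleteLattice R] [AddCommGroup R] [AddLeftMono R] (hR : WeaklySigmaDistrib R)
    {T : Type*} [TopologicalSpace T] [T2Space T] [MeasurableSpace T] [OpensMeasurableSpace T]
    {μ : Set T → R} (hreg : IsRegularSetFn μ) (hadd : IsFinitelyAdditive μ)
    (hpos : ∀ E, MeasurableSet E → 0 ≤ μ E) {C : ℕ → Set T} (hCm : ∀ n, MeasurableSet (C n))
    (hC : Antitone C) (hC₀ : ⋂ n, C n = ∅) : ⨅ n, μ (C n) = 0 := by
  choose a ha hKU using fun p => hreg (C p) (hCm p)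
  have hbdd : BddBelow (Set.range fun n => μ (C n)) :=
    ⟨0, by rintro _ ⟨n, rfl⟩; exact hpos _ (hCm n)⟩
  refine le_antisymm ?_ (le_ciInf fun n => hpos _ (hCm n))
  rw [← hR _ (isDSeq_mergedRegulator (hpos _ (hCm 0)) ha)]
  refine le_ciInf fun φ => ?_
  choose K U hK hU hKC hCU hUK using fun p => hKU p fun k => φ (k + p)
  have hKm p : MeasurableSet (K p) := (hK p).isClosed.measurableSet
  obtain ⟨n, hn⟩ := exists_subset_biUnion_diff_of_iInter_eq_empty hC hC₀ hK hKC
  have hCn : μ (C n) ≤ ∑ p ∈ range (n + 1), ⨆ k, a p k (φ (k + p)) :=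
    calc μ (C n) ≤ μ (⋃ p ∈ range (n + 1), C p \ K p) :=
          hadd.mono hpos (hCm n) (measurableSet_biUnion _ fun p _ => (hCm p).diff (hKm p)) hn
      _ ≤ ∑ p ∈ range (n + 1), μ (C p \ K p) :=
          hadd.apply_biUnion_le hpos _ fun p => (hCm p).diff (hKm p)
      _ ≤ ∑ p ∈ range (n + 1), μ (U p \ K p) := sum_le_sum fun p _ =>
          hadd.mono hpos ((hCm p).diff (hKm p)) ((hU p).measurableSet.diff (hKm p))
            (Set.sdiff_subset_sdiff_left (hCU p))
      _ ≤ _ := sum_le_sum fun p _ => hUK p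
  calc ⨅ n, μ (C n) ≤ μ (C 0) ⊓ μ (C n) := le_inf (ciInf_le hbdd 0) (ciInf_le hbdd n)
    _ ≤ μ (C 0) ⊓ ∑ p ∈ range (n + 1), ⨆ k, a p k (φ (k + p)) := inf_le_inf_left _ hCn
    _ ≤ _ := inf_sum_ciSup_le_ciSup_mergedRegulator _ ha φ n

lemma dConv_of_abs_sub_le {R : Type*} [ConditionallyCompleteLattice R] [AddCommGroup R]
    {r : ℕ → R} {l : R} {d : ℕ → R} (hd : Antitone d) (hd₀ : 0 ≤ d) (hd' : ⨅ n, d n = 0)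
    (hr : ∀ n, |r n - l| ≤ d n) : DConv r l := by
  refine ⟨fun _ j => d j, ⟨⟨d 0, fun _ j => hd (Nat.zero_le j)⟩, fun _ => hd₀,
    fun _ j => hd j.le_succ, fun _ => hd'⟩, fun φ => ⟨φ 0, fun n hn => ?_⟩⟩
  have hbdd : BddAbove (Set.range fun i => d (φ i)) :=
    ⟨d 0, by rintro _ ⟨i, rfl⟩; exact hd (Nat.zero_le _)⟩
  exact (hr n).trans ((hd hn).trans (le_ciSup hbdd 0))

theorem regular_sigma_additive_general {R : Type*} [ConditionallyCompleteLattice R] [AddCommGroup R]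
    [CovariantClass R R (· + ·) (· ≤ ·)]
    {T : Type*} [MetricSpace T] [MeasurableSpace T] [BorelSpace T]
    (hR : WeaklySigmaDistrib R)
    (μ : Set T → R)
    (hpos : ∀ E : Set T, MeasurableSet E → 0 ≤ μ E)
    (hadd : ∀ A B : Set T, MeasurableSet A → MeasurableSet B → Disjoint A B →
      μ (A ∪ B) = μ A + μ B)
    (hreg : IsRegularSetFn μ)
    (A : ℕ → Set T) (hA : ∀ k, MeasurableSet (A k))
    (hdisj : Pairwise (Function.onFun Disjoint A)) :
    DConv (fun n => ∑ k ∈ Finset.range n, μ (A k)) (μ (⋃ k, A k)) := by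
  replace hadd : IsFinitelyAdditive μ := hadd
  set E := ⋃ k, A k
  set B : ℕ → Set T := fun n => ⋃ k ∈ range n, A k
  have hEm : MeasurableSet E := .iUnion hA
  have hBm n : MeasurableSet (B n) := Finset.measurableSet_biUnion _ fun k _ => hA k
  have hCm n : MeasurableSet (E \ B n) := hEm.diff (hBm n)
  have hC : Antitone fun n => E \ B n := fun m n hmn =>
    Set.sdiff_subset_sdiff_right (Set.biUnion_subset_biUnion_left (by simpa using hmn))
  have hC₀ : ⋂ n, E \ B n = ∅ := Set.eq_empty_iff_forall_notMem.2 fun x hx => by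
    obtain ⟨k, hk⟩ := Set.mem_iUnion.1 (Set.mem_iInter.1 hx 0).1
    exact (Set.mem_iInter.1 hx (k + 1)).2 (Set.mem_biUnion (mem_range.2 k.lt_succ_self) hk)
  refine dConv_of_abs_sub_le (fun m n hmn => hadd.mono hpos (hCm n) (hCm m) (hC hmn))
    (fun n => hpos _ (hCm n)) (hreg.ciInf_eq_zero_of_iInter_eq_empty hR hadd hpos hCm hC hC₀)
    fun n => ?_
  rw [hadd.apply_eq_add_diff (hBm n) hEm (Set.iUnion₂_subset fun k _ => Set.subset_iUnion A k),
    hadd.apply_biUnion _ hA hdisj]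
  simp [abs_of_nonneg (hpos _ (hCm n))]

/-- A positive, finitely additive, regular set function on the Borel σ-algebra of a compact
metric space, with values in a Dedekind complete weakly σ-distributive Riesz space, is
σ-additive: for pairwise disjoint Borel sets `A k`, the partial sums of `Σ_k μ(A k)`
`(D)`-converge to `μ(⋃ k, A k)`. -/
theorem regular_sigma_additive {R : Type*} [ConditionallyCompleteLattice R] [AddCommGroup R]
    [Module ℝ R] [CovariantClass R R (· + ·) (· ≤ ·)]
    {T : Type*} [MetricSpace T] [CompactSpace T] [MeasurableSpace T] [BorelSpace T]
    (hR : WeaklySigmaDistrib R)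
    (μ : Set T → R)
    (hpos : ∀ E : Set T, MeasurableSet E → 0 ≤ μ E)
    (hadd : ∀ A B : Set T, MeasurableSet A → MeasurableSet B → Disjoint A B →
      μ (A ∪ B) = μ A + μ B)
    (hreg : IsRegularSetFn μ)
    (A : ℕ → Set T) (hA : ∀ k, MeasurableSet (A k))
    (hdisj : Pairwise (Function.onFun Disjoint A)) :
    DConv (fun n => ∑ k ∈ Finset.range n, μ (A k)) (μ (⋃ k, A k)) :=
  regular_sigma_additive_general hR μ hpos hadd hreg A hA hdisj
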